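/- Let n ≥ 1 be odd, set ν = (n−1)/2 and m = (n+1)/2, and let L_ν denote the operator u ↦ Δ_ν u − u on smooth functions on an interval. Let R > 0 and let h : (R,∞) → ℝ be a smooth function such that L_ν^m h = 0 on (R,∞) and ∫_R^∞ h(r)²·r^{n−1} dr < ∞. Then there exist real numbers α_0, …, α_ν such that h(r) = α_0·ψ_0(r) + ⋯ + α_ν·ψ_ν(r) for all r > R. -/

import Mathlib

open Polynomial

/-- The polynomials `g_j`, defined by `g_0 = 1` and `g_{j+1}(t) = t³ g_j'(t) + t g_j(t)`. -/
noncomputable def g : ℕ → Polynomial ℤ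
  | 0 => 1
  | j + 1 => X ^ 3 * derivative (g j) + X * g j

/-- `ψ_j(r) = e^{-r} g_j(1/r)`. -/
noncomputable def psi (j : ℕ) (r : ℝ) : ℝ := Real.exp (-r) * (Polynomial.aeval r⁻¹) (g j)

/-- The operator `L_ν u = Δ_ν u - u`, where `Δ_ν u(r) = u''(r) + (2ν/r) u'(r)`. -/
noncomputable def Lop (ν : ℕ) (u : ℝ → ℝ) : ℝ → ℝ :=
  fun r => (deriv (deriv u) r + 2 * (ν : ℝ) / r * deriv u r) - u r

open MeasureTheory Filter

lemma g_succ (j : ℕ) : g (j + 1) = X ^ 3 * derivative (g j) + X * g j := rfl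

lemma g_key (j : ℕ) :
    g (j + 2) = X ^ 2 * g j + (2 * (j : Polynomial ℤ) + 1) * (X ^ 2 * g (j + 1)) := by
  induction j with
  | zero =>
      simp [g]
      ring
  | succ j ih =>
      have e1 := g_succ j
      have e2 := g_succ (j + 1)
      have e4 : derivative (g (j + 2)) =
          2 * X * g j + X ^ 2 * derivative (g j) +
            (2 * (j : Polynomial ℤ) + 1) * (2 * X * g (j + 1) + X ^ 2 * derivative (g (j + 1))) := by
        rw [ih]
        simp only [derivative_add, derivative_mul, derivative_X_pow, derivative_X, derivative_ofNat,
          derivative_one, derivative_natCast, Polynomial.C_eq_natCast]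
        push_cast
        ring
      rw [show g (j + 1 + 2) = g ((j + 2) + 1) from rfl, g_succ (j + 2), e4,
        show g (j + 1 + 1) = g (j + 2) from rfl]
      push_cast
      linear_combination (-X^2 : Polynomial ℤ) * e1 - (2*(j : Polynomial ℤ)+1)*X^2*e2 + (X - 2*X^2)*ih

/-- The polynomials `g j` seen over `ℝ`. -/
noncomputable def PP (j : ℕ) : Polynomial ℝ := (g j).map (Int.castRingHom ℝ)

lemma PP_zero : PP 0 = 1 := by simp [PP, g]

lemma PP_succ (j : ℕ) : PP (j + 1) = X ^ 3 * derivative (PP j) + X * PP j := by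
  simp [PP, g_succ, Polynomial.derivative_map, Polynomial.map_add, Polynomial.map_mul,
    Polynomial.map_pow, Polynomial.map_X]

lemma PP_one : PP 1 = X := by
  rw [show (1:ℕ) = 0 + 1 from rfl, PP_succ, PP_zero]; simp

lemma PP_key (j : ℕ) :
    PP (j + 2) = X ^ 2 * PP j + (2 * (j : Polynomial ℝ) + 1) * (X ^ 2 * PP (j + 1)) := by
  have := congrArg (Polynomial.map (Int.castRingHom ℝ)) (g_key j)
  simpa [PP, Polynomial.map_add, Polynomial.map_mul, Polynomial.map_pow] using this

/-- Uniform family: `F (-1) = psi` (decaying) and `F 1` is the growing counterpart. -/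
noncomputable def F (ε : ℝ) (j : ℕ) (r : ℝ) : ℝ := Real.exp (ε * r) * (PP j).eval (-(ε * r⁻¹))

lemma psi_eq_F (j : ℕ) (r : ℝ) : psi j r = F (-1) j r := by
  rw [psi, F, Polynomial.aeval_def, ← Polynomial.eval_map]
  norm_num [PP, algebraMap_int_eq]

lemma hone : ((1:ℝ)) ^ 2 = 1 := one_pow 2
lemma hmone : ((-1:ℝ)) ^ 2 = 1 := by norm_num

lemma F_key {ε : ℝ} (hε : ε ^ 2 = 1) (j : ℕ) {r : ℝ} (hr : r ≠ 0) :
    r ^ 2 * F ε (j + 2) r = F ε j r + (2 * (j:ℝ) + 1) * F ε (j + 1) r := by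
  have h2 := PP_key j
  have := congrArg (Polynomial.eval (-(ε * r⁻¹))) h2
  simp only [Polynomial.eval_add, Polynomial.eval_mul, Polynomial.eval_pow, Polynomial.eval_X,
    Polynomial.eval_one, Polynomial.eval_ofNat, Polynomial.eval_natCast] at this
  simp only [F]
  rw [this]
  have hε' : ε * ε = 1 := by nlinarith [sq_nonneg ε]
  field_simp
  ring_nf
  simp [hε]

lemma F_hasDerivAt {ε : ℝ} (hε : ε ^ 2 = 1) (j : ℕ) {r : ℝ} (hr : r ≠ 0) :
    HasDerivAt (F ε j) (-r * F ε (j + 1) r) r := by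
  have hε' : ε * ε = 1 := by nlinarith [sq_nonneg ε]
  have h1 : HasDerivAt (fun r : ℝ => Real.exp (ε * r)) (ε * Real.exp (ε * r)) r := by
    exact ((Real.hasDerivAt_exp (ε * r)).comp r ((hasDerivAt_id r).const_mul ε)).congr_deriv (by simp; ring)
  have h2 : HasDerivAt (fun r : ℝ => -(ε * r⁻¹)) (ε * (r ^ 2)⁻¹) r := by
    exact ((hasDerivAt_inv hr).const_mul ε).neg.congr_deriv (by ring)
  have h3 : HasDerivAt (fun r : ℝ => (PP j).eval (-(ε * r⁻¹)))
      ((derivative (PP j)).eval (-(ε * r⁻¹)) * (ε * (r ^ 2)⁻¹)) r := by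
    have := ((PP j).hasDerivAt (-(ε * r⁻¹))).comp r h2; exact this
  have h4 := h1.mul h3
  refine h4.congr_deriv ?_
  symm
  have e : (PP (j+1)).eval (-(ε * r⁻¹)) =
      (-(ε * r⁻¹)) ^ 3 * (derivative (PP j)).eval (-(ε * r⁻¹)) + (-(ε * r⁻¹)) * (PP j).eval (-(ε * r⁻¹)) := by
    rw [PP_succ]; simp
  simp only [F, e]
  field_simp
  ring_nf
  have hε3 : ε ^ 3 = ε := by rw [show (3:ℕ)=2+1 from rfl, pow_succ, hε, one_mul]
  rw [hε3]

/-- The (rescaled) Wronskian is constant, evaluated by induction. -/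
lemma W_val (j : ℕ) {r : ℝ} (hr : 0 < r) :
    r ^ (2 * j + 1) * (F (-1) (j + 1) r * F 1 j r - F (-1) j r * F 1 (j + 1) r)
      = 2 * (-1 : ℝ) ^ j := by
  have hr' : r ≠ 0 := ne_of_gt hr
  induction j with
  | zero =>
      norm_num
      simp only [F, PP_zero, PP_one, Polynomial.eval_one, Polynomial.eval_X]
      have hex : Real.exp (-r) * Real.exp r = 1 := by
        rw [← Real.exp_add]; norm_num
      field_simp
      nlinarith [hex]
  | succ j ih =>
      have k1 := F_key hmone j hr'
      have k2 := F_key hone j hr'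
      have e1 : r ^ (2 * (j+1) + 1) = r ^ (2 * j + 1) * r ^ 2 := by
        rw [← pow_add]; ring_nf
      have key : r ^ (2*j+1) * ((r^2 * F (-1) (j + 2) r) * F 1 (j+1) r
          - F (-1) (j+1) r * (r^2 * F 1 (j + 2) r)) = 2 * (-1:ℝ)^(j+1) := by
        rw [k1, k2]
        have : r ^ (2*j+1) * ((F (-1) j r + (2*(j:ℝ)+1) * F (-1) (j+1) r) * F 1 (j+1) r
            - F (-1) (j+1) r * (F 1 j r + (2*(j:ℝ)+1) * F 1 (j+1) r))
            = -(r ^ (2 * j + 1) * (F (-1) (j + 1) r * F 1 j r - F (-1) j r * F 1 (j + 1) r)) := by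
          ring
        rw [this, ih]
        ring
      rw [← key, e1]
      ring

lemma pow_helper (ν : ℕ) (r : ℝ) :
    ((2 * ν : ℕ) : ℝ) * r ^ (2 * ν - 1) * r = ((2 * ν : ℕ) : ℝ) * r ^ (2 * ν) := by
  cases ν with
  | zero => simp
  | succ k =>
      have h1 : 2 * (k + 1) - 1 = 2 * k + 1 := by omega
      have h2 : 2 * (k + 1) = (2 * k + 1) + 1 := by omega
      rw [h1, h2, pow_succ]; ring

/-- Structure of solutions of the second order equation `L_ν w = 0`. -/
lemma second_order (ν : ℕ) {R : ℝ} (hR : 0 < R) (w w1 w2 : ℝ → ℝ)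
    (hw : ∀ r ∈ Set.Ioi R, HasDerivAt w (w1 r) r)
    (hw1 : ∀ r ∈ Set.Ioi R, HasDerivAt w1 (w2 r) r)
    (heq : ∀ r ∈ Set.Ioi R, w2 r + 2 * (ν:ℝ) / r * w1 r - w r = 0) :
    ∃ A B : ℝ, ∀ r ∈ Set.Ioi R, w r = A * F (-1) ν r + B * F 1 ν r := by
  have hE : ∀ ε : ℝ, ε ^ 2 = 1 → ∀ r ∈ Set.Ioi R, HasDerivAt
      (fun x => x ^ (2*ν) * (F ε ν x * w1 x + x * F ε (ν+1) x * w x)) 0 r := by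
    intro ε hε r hr
    have h0 : (0:ℝ) < r := hR.trans hr
    have h0' : r ≠ 0 := ne_of_gt h0
    have hpow : HasDerivAt (fun x : ℝ => x ^ (2*ν)) (((2*ν : ℕ):ℝ) * r ^ (2*ν-1)) r := by
      simpa using hasDerivAt_pow (2*ν) r
    have hB : HasDerivAt (fun x => F ε ν x * w1 x + x * F ε (ν+1) x * w x)
        ((-r * F ε (ν+1) r) * w1 r + F ε ν r * w2 r +
          ((1 * F ε (ν+1) r + r * (-r * F ε (ν+2) r)) * w r + r * F ε (ν+1) r * w1 r)) r := by
      exact ((F_hasDerivAt hε ν h0').mul (hw1 r hr)).add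
        (((hasDerivAt_id r).mul (F_hasDerivAt hε (ν+1) h0')).mul (hw r hr))
    have htot := hpow.mul hB
    refine htot.congr_deriv ?_
    have heqr := heq r hr
    have heq2 : r * w2 r + 2 * (ν:ℝ) * w1 r - r * w r = 0 := by
      field_simp at heqr
      linarith [heqr]
    have hkey := F_key hε ν h0'
    have hpow2 := pow_helper ν r
    have hmul : (((2*ν : ℕ):ℝ) * r ^ (2*ν-1) * (F ε ν r * w1 r + r * F ε (ν+1) r * w r) +
        r ^ (2*ν) * ((-r * F ε (ν+1) r) * w1 r + F ε ν r * w2 r +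
          ((1 * F ε (ν+1) r + r * (-r * F ε (ν+2) r)) * w r + r * F ε (ν+1) r * w1 r))) * r = 0 := by
      push_cast
      push_cast at hpow2
      linear_combination (F ε ν r * w1 r + r * F ε (ν+1) r * w r) * hpow2 +
        (r ^ (2*ν) * F ε ν r) * heq2 - (r ^ (2*ν) * w r * r) * hkey
    have := mul_eq_zero.mp hmul
    rcases this with h | h
    · exact h
    · exact absurd h h0'
  have hconst : ∀ ε : ℝ, ε ^ 2 = 1 → ∀ r ∈ Set.Ioi R,
      r ^ (2*ν) * (F ε ν r * w1 r + r * F ε (ν+1) r * w r)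
      = (R+1) ^ (2*ν) * (F ε ν (R+1) * w1 (R+1) + (R+1) * F ε (ν+1) (R+1) * w (R+1)) := by
    intro ε hε r hr
    have hR1 : (R+1) ∈ Set.Ioi R := by simp
    exact (convex_Ioi R).is_const_of_fderivWithin_eq_zero
      (fun x hx => ((hE ε hε x hx).differentiableAt).differentiableWithinAt)
      (fun x hx => by
        rw [fderivWithin_of_isOpen isOpen_Ioi hx, (hE ε hε x hx).hasFDerivAt.fderiv]
        ext y; simp) hr hR1
  set Cm := (R+1) ^ (2*ν) * (F (-1) ν (R+1) * w1 (R+1) + (R+1) * F (-1) (ν+1) (R+1) * w (R+1)) with hCm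
  set Cp := (R+1) ^ (2*ν) * (F 1 ν (R+1) * w1 (R+1) + (R+1) * F 1 (ν+1) (R+1) * w (R+1)) with hCp
  refine ⟨-(-1:ℝ)^ν/2 * Cp, (-1:ℝ)^ν/2 * Cm, fun r hr => ?_⟩
  have h0 : (0:ℝ) < r := hR.trans hr
  have e1 := hconst (-1) (by norm_num) r hr
  have e2 := hconst 1 (one_pow 2) r hr
  have W := W_val ν h0
  have hsq : ((-1:ℝ)^ν)^2 = 1 := by
    rw [← pow_mul, mul_comm, pow_mul]; norm_num
  linear_combination ((-1:ℝ)^ν/2) * (F 1 ν r * e1 - F (-1) ν r * e2 - w r * W) - w r * hsq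

/-- Combinations of the basis functions, with an index shift `s`. -/
noncomputable def comb (c d : ℕ → ℝ) (N s : ℕ) (x : ℝ) : ℝ :=
  ∑ j ∈ Finset.range N, (c j * F (-1) (j + s) x + d j * F 1 (j + s) x)

lemma comb_hasDerivAt (c d : ℕ → ℝ) (N s : ℕ) {r : ℝ} (hr : r ≠ 0) :
    HasDerivAt (comb c d N s) (-r * comb c d N (s+1) r) r := by
  have H : HasDerivAt (comb c d N s)
      (∑ j ∈ Finset.range N, (c j * (-r * F (-1) (j + s + 1) r) + d j * (-r * F 1 (j + s + 1) r))) r :=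
    HasDerivAt.fun_sum fun j _ =>
      ((F_hasDerivAt hmone (j + s) hr).const_mul (c j)).add
        ((F_hasDerivAt hone (j + s) hr).const_mul (d j))
  convert H using 1
  rw [comb, Finset.mul_sum]
  refine Finset.sum_congr rfl fun j _ => ?_
  rw [show j + (s + 1) = j + s + 1 from rfl]
  ring

lemma comb_deriv_eq (c d : ℕ → ℝ) (N s : ℕ) :
    ∀ x ∈ Set.Ioi (0:ℝ), deriv (comb c d N s) x = -x * comb c d N (s+1) x :=
  fun x hx => (comb_hasDerivAt c d N s (ne_of_gt hx)).deriv

lemma comb_hasDerivAt2 (c d : ℕ → ℝ) (N s : ℕ) {r : ℝ} (hr : 0 < r) :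
    HasDerivAt (deriv (comb c d N s))
      (-comb c d N (s+1) r + r ^ 2 * comb c d N (s+2) r) r := by
  have hG : HasDerivAt (fun x : ℝ => -x * comb c d N (s+1) x)
      (-1 * comb c d N (s+1) r + -r * (-r * comb c d N (s+1+1) r)) r :=
    (hasDerivAt_id r).neg.mul (comb_hasDerivAt c d N (s+1) (ne_of_gt hr))
  have h2 : HasDerivAt (deriv (comb c d N s))
      (-1 * comb c d N (s+1) r + -r * (-r * comb c d N (s+1+1) r)) r := by
    apply hG.congr_of_eventuallyEq
    filter_upwards [isOpen_Ioi.mem_nhds hr] with x hx using comb_deriv_eq c d N s x hx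
  convert h2 using 1
  rw [show s + 2 = s + 1 + 1 from rfl]
  ring

lemma Lop_comb (ν : ℕ) (c d : ℕ → ℝ) (N : ℕ) {r : ℝ} (hr : 0 < r) :
    Lop ν (comb c d N 0) r =
      ∑ j ∈ Finset.range N, (2 * ((j:ℝ) - ν)) * (c j * F (-1) (j + 1) r + d j * F 1 (j + 1) r) := by
  have hr' : r ≠ 0 := ne_of_gt hr
  have h1 : deriv (comb c d N 0) r = -r * comb c d N 1 r := comb_deriv_eq c d N 0 r hr
  have h2 : deriv (deriv (comb c d N 0)) r = -comb c d N 1 r + r ^ 2 * comb c d N 2 r :=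
    (comb_hasDerivAt2 c d N 0 hr).deriv
  have hdiv : 2 * (ν:ℝ) / r * (-r * comb c d N 1 r) = -(2*(ν:ℝ)) * comb c d N 1 r := by
    field_simp
  have hsplit : r ^ 2 * comb c d N 2 r = comb c d N 0 r
      + ∑ j ∈ Finset.range N, (2*(j:ℝ)+1) * (c j * F (-1) (j+1) r + d j * F 1 (j+1) r) := by
    rw [comb, comb, Finset.mul_sum, ← Finset.sum_add_distrib]
    refine Finset.sum_congr rfl fun j _ => ?_
    have k1 := F_key hmone j hr'
    have k2 := F_key hone j hr'
    simp only [Nat.add_zero, zero_add]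
    linear_combination (c j) * k1 + (d j) * k2
  rw [Lop, h1, h2, hdiv, hsplit]
  rw [show comb c d N 1 r = ∑ j ∈ Finset.range N, (c j * F (-1) (j+1) r + d j * F 1 (j+1) r) from rfl]
  have hx : ∑ j ∈ Finset.range N, 2 * ((j:ℝ) - ν) * (c j * F (-1) (j+1) r + d j * F 1 (j+1) r)
      = (∑ j ∈ Finset.range N, (2*(j:ℝ)+1) * (c j * F (-1) (j+1) r + d j * F 1 (j+1) r))
        + (-(2*(ν:ℝ))) * (∑ j ∈ Finset.range N, (c j * F (-1) (j+1) r + d j * F 1 (j+1) r))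
        + -(∑ j ∈ Finset.range N, (c j * F (-1) (j+1) r + d j * F 1 (j+1) r)) := by
    rw [Finset.mul_sum, ← Finset.sum_neg_distrib, ← Finset.sum_add_distrib, ← Finset.sum_add_distrib]
    exact Finset.sum_congr rfl fun j _ => by ring
  rw [hx]
  ring

lemma smooth_has1 {R : ℝ} {u : ℝ → ℝ} (hu : ContDiffOn ℝ (⊤:ℕ∞) u (Set.Ioi R)) :
    ∀ r ∈ Set.Ioi R, HasDerivAt u (deriv u r) r := fun r hr =>
  ((hu.differentiableOn (by simp)).differentiableAt (isOpen_Ioi.mem_nhds hr)).hasDerivAt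

lemma smooth_deriv {R : ℝ} {u : ℝ → ℝ} (hu : ContDiffOn ℝ (⊤:ℕ∞) u (Set.Ioi R)) :
    ContDiffOn ℝ (⊤:ℕ∞) (deriv u) (Set.Ioi R) :=
  hu.deriv_of_isOpen isOpen_Ioi (le_of_eq (by rfl))

lemma Lop_smooth (ν : ℕ) {R : ℝ} (hR : 0 < R) {u : ℝ → ℝ}
    (hu : ContDiffOn ℝ (⊤:ℕ∞) u (Set.Ioi R)) :
    ContDiffOn ℝ (⊤:ℕ∞) (Lop ν u) (Set.Ioi R) := by
  have c1 := smooth_deriv hu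
  have c2 := smooth_deriv c1
  have cdiv : ContDiffOn ℝ (⊤:ℕ∞) (fun r : ℝ => 2 * (ν:ℝ) / r) (Set.Ioi R) :=
    ContDiffOn.div contDiffOn_const contDiffOn_id (fun x hx => ne_of_gt (hR.trans hx))
  exact (c2.add (cdiv.mul c1)).sub hu
lemma main_induction (ν : ℕ) {R : ℝ} (hR : 0 < R) :
    ∀ k : ℕ, 1 ≤ k → k ≤ ν + 1 → ∀ h : ℝ → ℝ,
      ContDiffOn ℝ (⊤:ℕ∞) h (Set.Ioi R) →
      (∀ r ∈ Set.Ioi R, (Lop ν)^[k] h r = 0) →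
      ∃ a b : ℕ → ℝ, (∀ j, j + k ≤ ν → a j = 0 ∧ b j = 0) ∧
        ∀ r ∈ Set.Ioi R, h r = comb a b (ν+1) 0 r := by
  intro k
  induction k with
  | zero => omega
  | succ k ih =>
    intro _ hkν h hsmooth heq
    rcases Nat.eq_zero_or_pos k with rfl | hk1
    · -- base case : second order equation
      have heq1 : ∀ r ∈ Set.Ioi R, deriv (deriv h) r + 2 * (ν:ℝ) / r * deriv h r - h r = 0 := by
        intro r hr
        have := heq r hr
        rwa [Function.iterate_one] at this
      obtain ⟨A, B, hAB⟩ := second_order ν hR h (deriv h) (deriv (deriv h))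
        (smooth_has1 hsmooth) (smooth_has1 (smooth_deriv hsmooth)) heq1
      refine ⟨fun j => if j = ν then A else 0, fun j => if j = ν then B else 0, ?_, ?_⟩
      · intro j hj
        have : j ≠ ν := by omega
        simp [this]
      · intro r hr
        rw [comb, Finset.sum_eq_single_of_mem ν (Finset.self_mem_range_succ ν)
          (fun j _ hj => by simp [hj])]
        simpa using hAB r hr
    · -- inductive step
      have hw : ContDiffOn ℝ (⊤:ℕ∞) (Lop ν h) (Set.Ioi R) := Lop_smooth ν hR hsmooth
      have hLk : ∀ r ∈ Set.Ioi R, (Lop ν)^[k] (Lop ν h) r = 0 := fun r hr => by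
        rw [← Function.iterate_succ_apply]; exact heq r hr
      obtain ⟨a, b, hvan, hrep⟩ := ih hk1 (by omega) (Lop ν h) hw hLk
      have ha0 : a 0 = 0 := (hvan 0 (by omega)).1
      have hb0 : b 0 = 0 := (hvan 0 (by omega)).2
      set c : ℕ → ℝ := fun j => if j < ν then a (j+1) / (2*((j:ℝ) - ν)) else 0 with hc
      set d : ℕ → ℝ := fun j => if j < ν then b (j+1) / (2*((j:ℝ) - ν)) else 0 with hd
      -- Lop of the particular solution equals Lop h on the interval
      have hLp : ∀ r ∈ Set.Ioi R, Lop ν (comb c d (ν+1) 0) r = Lop ν h r := by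
        intro r hr
        have hr0 : (0:ℝ) < r := hR.trans hr
        rw [Lop_comb ν c d (ν+1) hr0, hrep r hr]
        have hsum : ∀ j ∈ Finset.range (ν+1),
            (2 * ((j:ℝ) - ν)) * (c j * F (-1) (j + 1) r + d j * F 1 (j + 1) r)
            = if j < ν then a (j+1) * F (-1) (j+1) r + b (j+1) * F 1 (j+1) r else 0 := by
          intro j _
          by_cases hj : j < ν
          · have hne : ((j:ℝ) - ν) ≠ 0 := by
              have : (j:ℝ) < ν := by exact_mod_cast hj
              intro hcon; linarith
            simp only [hc, hd, if_pos hj]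
            field_simp
          · simp [hc, hd, hj]
        rw [Finset.sum_congr rfl hsum]
        rw [Finset.sum_range_succ, if_neg (lt_irrefl ν), add_zero]
        rw [comb, Finset.sum_range_succ', ha0, hb0]
        simp only [Nat.add_zero, zero_mul, add_zero, zero_add]
        exact Finset.sum_congr rfl (fun j hj => if_pos (Finset.mem_range.mp hj))
      -- apply the second order lemma to h - p
      have hu : ∀ r ∈ Set.Ioi R, HasDerivAt (fun x => h x - comb c d (ν+1) 0 x)
          (deriv h r - (-r * comb c d (ν+1) 1 r)) r := fun r hr =>
        (smooth_has1 hsmooth r hr).sub (comb_hasDerivAt c d (ν+1) 0 (ne_of_gt (hR.trans hr)))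
      have hu1 : ∀ r ∈ Set.Ioi R, HasDerivAt (fun x => deriv h x - (-x * comb c d (ν+1) 1 x))
          (deriv (deriv h) r - (-comb c d (ν+1) 1 r + r^2 * comb c d (ν+1) 2 r)) r := by
        intro r hr
        have hr0 : (0:ℝ) < r := hR.trans hr
        have hG : HasDerivAt (fun x : ℝ => -x * comb c d (ν+1) 1 x)
            (-1 * comb c d (ν+1) 1 r + -r * (-r * comb c d (ν+1) (1+1) r)) r :=
          (hasDerivAt_id r).neg.mul (comb_hasDerivAt c d (ν+1) 1 (ne_of_gt hr0))
        have := (smooth_has1 (smooth_deriv hsmooth) r hr).sub hG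
        refine this.congr_deriv ?_
        ring
      have hequ : ∀ r ∈ Set.Ioi R,
          (deriv (deriv h) r - (-comb c d (ν+1) 1 r + r^2 * comb c d (ν+1) 2 r))
          + 2 * (ν:ℝ) / r * (deriv h r - (-r * comb c d (ν+1) 1 r))
          - (h r - comb c d (ν+1) 0 r) = 0 := by
        intro r hr
        have hr0 : (0:ℝ) < r := hR.trans hr
        have hLc : Lop ν (comb c d (ν+1) 0) r
            = (-comb c d (ν+1) 1 r + r^2 * comb c d (ν+1) 2 r)
              + 2 * (ν:ℝ) / r * (-r * comb c d (ν+1) 1 r) - comb c d (ν+1) 0 r := by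
          rw [Lop, comb_deriv_eq c d (ν+1) 0 r hr0, (comb_hasDerivAt2 c d (ν+1) 0 hr0).deriv]
        have hLh : Lop ν h r = deriv (deriv h) r + 2 * (ν:ℝ) / r * deriv h r - h r := rfl
        have := hLp r hr
        rw [hLc, hLh] at this
        linarith [this]
      obtain ⟨A, B, hAB⟩ := second_order ν hR _ _ _ hu hu1 hequ
      refine ⟨fun j => c j + if j = ν then A else 0, fun j => d j + if j = ν then B else 0, ?_, ?_⟩
      · intro j hj
        have hjν : j ≠ ν := by omega
        have hjlt : j < ν := by omega
        have hA : a (j+1) = 0 := (hvan (j+1) (by omega)).1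
        have hB : b (j+1) = 0 := (hvan (j+1) (by omega)).2
        simp [hc, hd, hjν, hjlt, hA, hB]
      · intro r hr
        have hsplit : comb (fun j => c j + if j = ν then A else 0)
            (fun j => d j + if j = ν then B else 0) (ν+1) 0 r
            = comb c d (ν+1) 0 r
              + ∑ j ∈ Finset.range (ν+1), ((if j = ν then A else 0) * F (-1) (j+0) r
                  + (if j = ν then B else 0) * F 1 (j+0) r) := by
          rw [comb, comb, ← Finset.sum_add_distrib]
          exact Finset.sum_congr rfl fun j _ => by ring
        rw [hsplit, Finset.sum_eq_single_of_mem ν (Finset.self_mem_range_succ ν)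
          (fun j _ hj => by simp [hj])]
        norm_num
        have := hAB r hr
        linarith [this]
theorem radial_solutions_span (n : ℕ) (hn1 : 1 ≤ n) (hodd : Odd n)
    (R : ℝ) (hR : 0 < R) (h : ℝ → ℝ)
    (hsmooth : ContDiffOn ℝ (⊤ : ℕ∞) h (Set.Ioi R))
    (heq : ∀ r ∈ Set.Ioi R, (Lop ((n - 1) / 2))^[(n + 1) / 2] h r = 0)
    (hL2 : MeasureTheory.IntegrableOn (fun r => h r ^ 2 * r ^ (n - 1)) (Set.Ioi R)) :
    ∃ α : Fin ((n - 1) / 2 + 1) → ℝ,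
      ∀ r : ℝ, R < r → h r = ∑ i : Fin ((n - 1) / 2 + 1), α i * psi (i : ℕ) r := by
  obtain ⟨t, ht⟩ := hodd
  have e1 : (n-1)/2 = t := by omega
  have e2 : (n+1)/2 = t+1 := by omega
  rw [e1, e2] at heq
  rw [e1]
  have hsm' : ContDiffOn ℝ (⊤:ℕ∞) h (Set.Ioi R) := hsmooth.of_le (by simp)
  obtain ⟨a, b, -, hrep⟩ := main_induction t hR (t+1) (by omega) (le_refl _) h hsm' heq
  set Qb : Polynomial ℝ := ∑ j ∈ Finset.range (t+1), Polynomial.C (b j) * PP j with hQb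
  set Pa : Polynomial ℝ := ∑ j ∈ Finset.range (t+1), Polynomial.C (a j) * PP j with hPa
  have hbF : ∀ r : ℝ, ∑ j ∈ Finset.range (t+1), b j * F 1 (j+0) r
      = Real.exp r * Qb.eval (-r⁻¹) := by
    intro r
    rw [hQb, Polynomial.eval_finset_sum, Finset.mul_sum]
    refine Finset.sum_congr rfl fun j _ => ?_
    simp [F]
    ring
  have haF : ∀ r : ℝ, ∑ j ∈ Finset.range (t+1), a j * F (-1) (j+0) r
      = Real.exp (-r) * Pa.eval r⁻¹ := by
    intro r
    rw [hPa, Polynomial.eval_finset_sum, Finset.mul_sum]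
    refine Finset.sum_congr rfl fun j _ => ?_
    simp [F]
    ring
  have hsplit : ∀ r ∈ Set.Ioi R, h r
      = Real.exp (-r) * Pa.eval r⁻¹ + Real.exp r * Qb.eval (-r⁻¹) := by
    intro r hr
    rw [hrep r hr, comb, Finset.sum_add_distrib, hbF r, haF r]
  by_cases hQ : Qb = 0
  · refine ⟨fun i => a i, fun r hr => ?_⟩
    rw [Fin.sum_univ_eq_sum_range (fun j => a j * psi j r) (t+1)]
    have := hsplit r hr
    rw [hQ] at this
    simp only [Polynomial.eval_zero, mul_zero, add_zero] at this
    rw [this, ← haF r]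
    refine Finset.sum_congr rfl fun j _ => by rw [psi_eq_F, Nat.add_zero]
  · exfalso
    obtain ⟨q, hq, hnd⟩ := Qb.exists_eq_pow_rootMultiplicity_mul_and_not_dvd hQ 0
    set k := Qb.rootMultiplicity 0 with hk
    rw [map_zero, sub_zero] at hq hnd
    have hc : q.eval 0 ≠ 0 := by
      rw [← Polynomial.coeff_zero_eq_eval_zero]
      exact fun hcon => hnd (Polynomial.X_dvd_iff.mpr hcon)
    -- limit of h r * r^k * exp (-r)
    have t1 : Tendsto (fun r : ℝ => q.eval (-r⁻¹)) atTop (nhds (q.eval 0)) := by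
      have hi : Tendsto (fun r : ℝ => -r⁻¹) atTop (nhds (0:ℝ)) := by
        simpa using (tendsto_inv_atTop_zero (𝕜 := ℝ)).neg
      exact (q.continuous.tendsto 0).comp hi
    have t2 : Tendsto (fun r : ℝ => Pa.eval r⁻¹) atTop (nhds (Pa.eval 0)) :=
      (Pa.continuous.tendsto 0).comp tendsto_inv_atTop_zero
    have t3 : Tendsto (fun r : ℝ => r^k * Real.exp (-r) * Real.exp (-r)) atTop (nhds (0:ℝ)) := by
      simpa using (Real.tendsto_pow_mul_exp_neg_atTop_nhds_zero k).mul
        Real.tendsto_exp_neg_atTop_nhds_zero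
    set L : ℝ := (-1:ℝ)^k * q.eval 0 with hL
    have hmain : Tendsto (fun r => h r * (r^k * Real.exp (-r))) atTop (nhds L) := by
      have hcomb : Tendsto (fun r : ℝ => (-1:ℝ)^k * q.eval (-r⁻¹)
          + (r^k * Real.exp (-r) * Real.exp (-r)) * Pa.eval r⁻¹) atTop
          (nhds ((-1:ℝ)^k * q.eval 0 + 0 * Pa.eval 0)) :=
        (t1.const_mul _).add (t3.mul t2)
      rw [show (-1:ℝ)^k * q.eval 0 + 0 * Pa.eval 0 = L by rw [hL]; ring] at hcomb
      apply hcomb.congr'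
      filter_upwards [eventually_gt_atTop (max R 0)] with r hr
      have hrR : r ∈ Set.Ioi R := lt_of_le_of_lt (le_max_left R 0) hr
      have hr0 : (0:ℝ) < r := lt_of_le_of_lt (le_max_right R 0) hr
      have hr0' : r ≠ 0 := ne_of_gt hr0
      rw [hsplit r hrR, hq]
      have hev : Polynomial.eval (-r⁻¹) (X^k * q) = (-r⁻¹)^k * q.eval (-r⁻¹) := by
        simp
      rw [hev]
      have hexp : Real.exp r * Real.exp (-r) = 1 := by
        rw [← Real.exp_add]; simp
      have hpowk : (-r⁻¹)^k * r^k = (-1:ℝ)^k := by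
        rw [← mul_pow]
        congr 1
        field_simp
      linear_combination (-(-1:ℝ)^k * q.eval (-r⁻¹)) * hexp
        + (-(Real.exp r * Real.exp (-r)) * q.eval (-r⁻¹)) * hpowk
    have hLne : L ≠ 0 := mul_ne_zero (pow_ne_zero _ (by norm_num)) hc
    have hsq : Tendsto (fun r => (h r * (r^k * Real.exp (-r)))^2) atTop (nhds (L^2)) :=
      hmain.pow 2
    have hL2pos : 0 < L^2 := lt_of_le_of_ne (sq_nonneg L) (Ne.symm (pow_ne_zero 2 hLne))
    have hgrow : Tendsto (fun r : ℝ => Real.exp (2*r) / r^(2*k)) atTop atTop := by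
      have hg := (Real.tendsto_exp_div_pow_atTop k).atTop_mul_atTop₀
        (Real.tendsto_exp_div_pow_atTop k)
      apply hg.congr'
      filter_upwards [eventually_gt_atTop (0:ℝ)] with r hr
      rw [div_mul_div_comm, ← Real.exp_add, ← pow_add]
      congr 1 <;> ring
    have hv : Tendsto (fun r => (h r * (r^k * Real.exp (-r)))^2 * (Real.exp (2*r) / r^(2*k)))
        atTop atTop := Tendsto.pos_mul_atTop hL2pos hsq hgrow
    have hh2 : Tendsto (fun r => h r ^ 2) atTop atTop := by
      apply hv.congr'
      filter_upwards [eventually_gt_atTop (0:ℝ)] with r hr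
      have hr' : r ≠ 0 := ne_of_gt hr
      have hexp2 : Real.exp (-r)^2 * Real.exp (2*r) = 1 := by
        rw [← Real.exp_nat_mul, ← Real.exp_add]
        norm_num
      have hpow2 : (r^k)^2 = r^(2*k) := by rw [← pow_mul, mul_comm]
      field_simp
      rw [mul_comm r 2]
      linear_combination (h r^2 * (r^k)^2 * Real.exp (2*r) * 0) + (h r ^2 * r^(2*k)) * hexp2
        + (h r^2 * Real.exp (-r)^2 * Real.exp (2*r)) * hpow2 - (h r^2) * hpow2
    have hfin : ∀ᶠ r in atTop, (1:ℝ) ≤ h r ^ 2 * r ^ (n-1) := by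
      filter_upwards [hh2.eventually_ge_atTop 1, eventually_ge_atTop (1:ℝ)] with r hr1 hr2
      have hpw : (1:ℝ) ≤ r^(n-1) := one_le_pow₀ hr2
      calc (1:ℝ) = 1 * 1 := by norm_num
        _ ≤ h r ^ 2 * r^(n-1) := mul_le_mul hr1 hpw zero_le_one (sq_nonneg _)
    obtain ⟨M, hM⟩ := eventually_atTop.mp hfin
    set M' : ℝ := max M R with hM'
    have hsub : Set.Ioi M' ⊆ Set.Ioi R := Set.Ioi_subset_Ioi (le_max_right M R)
    have hIntM : IntegrableOn (fun r => h r ^ 2 * r ^ (n-1)) (Set.Ioi M') volume :=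
      hL2.mono_set hsub
    have hone : IntegrableOn (fun _ : ℝ => (1:ℝ)) (Set.Ioi M') volume := by
      refine MeasureTheory.Integrable.mono hIntM aestronglyMeasurable_const ?_
      rw [MeasureTheory.ae_restrict_iff' measurableSet_Ioi]
      filter_upwards with r hr
      have h1r : (1:ℝ) ≤ h r ^ 2 * r ^ (n-1) :=
        hM r (le_of_lt (lt_of_le_of_lt (le_max_left M R) hr))
      rw [norm_one, Real.norm_eq_abs]
      exact le_trans h1r (le_abs_self _)
    rw [MeasureTheory.integrableOn_const_iff] at hone
    rcases hone with h1 | h2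
    · norm_num at h1
    · rw [Real.volume_Ioi] at h2
      exact absurd h2 (by simp)
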